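/- arXiv:1707.03627 — 5 statements merged into one kernel-verified Lean document; each statement's English description precedes it below -/
import Mathlib

section
/- Let f : ℝ → ℝ be smooth, even, with |f'(x)| ≤ a < 1 for all x. Then for every x ∈ ℝ there is a unique y such that x + y = f(x - y); writing y = φ(x), the function φ satisfies φ(φ(x)) = x for all x. -/
open scoped NNReal ENNReal


theorem stmt_5 (f : ℝ → ℝ) (hf : ContDiff ℝ (⊤ : ℕ∞) f) (heven : ∀ x, f (-x) = f x)
    (a : ℝ) (ha : a < 1) (hbound : ∀ x, |deriv f x| ≤ a) :
    (∀ x : ℝ, ∃! y : ℝ, x + y = f (x - y)) ∧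
    ∃ φ : ℝ → ℝ, (∀ x, x + φ x = f (x - φ x)) ∧ (∀ x, φ (φ x) = x) := by
  have ha0 : 0 ≤ a := le_trans (abs_nonneg _) (hbound 0)
  set K : ℝ≥0 := ⟨a, ha0⟩ with hK
  have hdiff : Differentiable ℝ f := hf.differentiable (by simp)
  have hlip : LipschitzWith K f := by
    apply lipschitzWith_of_nnnorm_deriv_le hdiff
    intro x
    rw [← NNReal.coe_le_coe]
    exact hbound x
  have hlipd : ∀ u v : ℝ, |f u - f v| ≤ a * |u - v| := by
    intro u v
    have := hlip.dist_le_mul u v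
    rw [Real.dist_eq, Real.dist_eq] at this
    exact this
  have key : ∀ x : ℝ, ∃! y : ℝ, x + y = f (x - y) := by
    intro x
    have hcontr : ContractingWith K (fun y : ℝ => f (x - y) - x) := by
      constructor
      · exact_mod_cast ha
      · intro y1 y2
        rw [edist_dist, edist_dist, Real.dist_eq, Real.dist_eq]
        have h1 : |(f (x - y1) - x) - (f (x - y2) - x)| ≤ a * |y1 - y2| := by
          have := hlipd (x - y1) (x - y2)
          have e : (x - y1) - (x - y2) = -(y1 - y2) := by ring
          rw [e, abs_neg] at this
          calc |(f (x - y1) - x) - (f (x - y2) - x)| = |f (x - y1) - f (x - y2)| := by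
                ring_nf
            _ ≤ a * |y1 - y2| := this
        calc ENNReal.ofReal |(f (x - y1) - x) - (f (x - y2) - x)|
            ≤ ENNReal.ofReal (a * |y1 - y2|) := ENNReal.ofReal_le_ofReal h1
          _ = ENNReal.ofReal a * ENNReal.ofReal |y1 - y2| :=
              ENNReal.ofReal_mul ha0
          _ = (K : ℝ≥0∞) * ENNReal.ofReal |y1 - y2| := by
              rw [ENNReal.ofReal, Real.toNNReal_of_nonneg ha0]; rfl
    obtain ⟨y, hy⟩ : ∃ y : ℝ, f (x - y) - x = y := ⟨_, hcontr.fixedPoint_isFixedPt⟩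
    refine ⟨y, ?_, ?_⟩
    · have : f (x - y) - x = y := hy
      linarith
    · intro z hz
      have hyy : x + y = f (x - y) := by
        have : f (x - y) - x = y := hy
        linarith
      have h1 : |z - y| ≤ a * |z - y| := by
        have := hlipd (x - z) (x - y)
        have e : (x - z) - (x - y) = -(z - y) := by ring
        rw [e, abs_neg] at this
        have e2 : f (x - z) - f (x - y) = z - y := by linarith
        rwa [e2] at this
      by_contra hne
      have habs : 0 < |z - y| := abs_pos.2 (sub_ne_zero.2 hne)
      nlinarith
  refine ⟨key, ?_⟩
  set φ : ℝ → ℝ := fun x => (key x).choose with hφ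
  have hφ1 : ∀ x, x + φ x = f (x - φ x) := fun x => (key x).choose_spec.1
  refine ⟨φ, hφ1, fun x => ?_⟩
  have : φ x + x = f (φ x - x) := by
    have e : φ x - x = -(x - φ x) := by ring
    rw [e, heven]
    linarith [hφ1 x]
  exact ((key (φ x)).choose_spec.2 x this).symm
end

section
/- Let φ : ℝ → ℝ be continuous such that |φₙ(t)| → ∞ as n → ∞ for every t ∈ ℝ, and let f : ℝ → ℂ be continuous vanishing at infinity with f not identically 0. If f ∘ φ = λ·f for some λ ∈ ℂ, then |λ| < 1. -/
theorem stmt_14 (φ : ℝ → ℝ) (hc : Continuous φ)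
    (horb : ∀ t : ℝ, Filter.Tendsto (fun n : ℕ => |φ^[n] t|) Filter.atTop Filter.atTop)
    (f : ℝ → ℂ) (hf : Continuous f)
    (hvan : Filter.Tendsto f (Filter.cocompact ℝ) (nhds 0))
    (hne : f ≠ 0) (l : ℂ) (heig : ∀ x, f (φ x) = l * f x) :
    ‖l‖ < 1 := by
  obtain ⟨t, ht⟩ : ∃ t, f t ≠ 0 := by
    by_contra h
    push_neg at h
    exact hne (funext h)
  have hiter : ∀ n : ℕ, f (φ^[n] t) = l ^ n * f t := by
    intro n
    induction n with
    | zero => simp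
    | succ n ih =>
      rw [Function.iterate_succ_apply', heig, ih, pow_succ]
      ring
  have hco : Filter.Tendsto (fun n : ℕ => φ^[n] t) Filter.atTop (Filter.cocompact ℝ) := by
    rw [cocompact_eq_atBot_atTop, ← Filter.comap_abs_atTop, Filter.tendsto_comap_iff]
    exact horb t
  have h1 : Filter.Tendsto (fun n : ℕ => f (φ^[n] t)) Filter.atTop (nhds 0) :=
    hvan.comp hco
  have h2 : Filter.Tendsto (fun n : ℕ => l ^ n * f t) Filter.atTop (nhds 0) := by
    simpa only [hiter] using h1
  have h3 : Filter.Tendsto (fun n : ℕ => l ^ n) Filter.atTop (nhds 0) := by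
    have := h2.mul_const (f t)⁻¹
    simpa [mul_assoc, mul_inv_cancel₀ ht] using this
  have h4 : Filter.Tendsto (fun n : ℕ => ‖l‖ ^ n) Filter.atTop (nhds 0) := by
    simpa [norm_pow] using h3.norm
  have := tendsto_pow_atTop_nhds_zero_iff.mp h4
  rwa [abs_of_nonneg (norm_nonneg l)] at this
end

section
/- Let φ : ℝ → ℝ be a continuous bijection and f : ℝ → ℂ a continuous function vanishing at infinity, f not identically 0, such that f ∘ φ = λ·f. Suppose that for every t ∈ ℝ both (φₙ(t))ₙ and ((φ⁻¹)ₙ(t))ₙ converge in the extended reals. Then λ = 1. -/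
/-!
Iterating `f ∘ φ = λ • f` gives `f (φⁿ t) = λⁿ f t` and `λⁿ f (ψⁿ t) = f t`. Both orbits converge in
`[-∞, ∞]` and `f` is continuous with `f (±∞) = 0`, so both sequences of values converge; their
product is the constant `f t ^ 2 ≠ 0`, hence `λⁿ f t` has a nonzero limit `c`. Shifting the index
gives `λ c = c`, so `λ = 1`.
-/

open Filter Topology

theorem exists_tendsto_comp_of_tendsto_coe_ereal {X ι : Type*} [TopologicalSpace X] {f : ℝ → X}
    {a : X} (hf : Continuous f) (hvan : Tendsto f (cocompact ℝ) (𝓝 a)) {l : Filter ι}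
    {x : ι → ℝ} {L : EReal} (hx : Tendsto (fun i => (x i : EReal)) l (𝓝 L)) :
    ∃ c, Tendsto (f ∘ x) l (𝓝 c) := by
  induction L using EReal.rec with
  | coe b => exact ⟨f b, (hf.tendsto b).comp (EReal.tendsto_coe.mp hx)⟩
  | top =>
    refine ⟨a, hvan.comp ?_⟩
    rw [cocompact_eq_atBot_atTop]
    exact (EReal.tendsto_coe_nhds_top_iff.mp hx).mono_right le_sup_right
  | bot =>
    refine ⟨a, hvan.comp ?_⟩
    rw [cocompact_eq_atBot_atTop]
    exact (EReal.tendsto_coe_nhds_bot_iff.mp hx).mono_right le_sup_left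

section Field

variable {K : Type*} [Field K] [TopologicalSpace K] [T2Space K] [ContinuousMul K]

theorem eq_one_of_tendsto_pow_mul {l a c : K} (hc : c ≠ 0)
    (h : Tendsto (fun n : ℕ => l ^ n * a) atTop (𝓝 c)) : l = 1 := by
  have hshift : Tendsto (fun n : ℕ => l * (l ^ n * a)) atTop (𝓝 c) := by
    simpa only [Function.comp_def, pow_succ', mul_assoc] using h.comp (tendsto_add_atTop_nat 1)
  exact (mul_eq_right₀ hc).mp (tendsto_nhds_unique (h.const_mul l) hshift)

theorem eq_one_of_tendsto_pow_mul_of_tendsto {l a c c' : K} {v : ℕ → K} (ha : a ≠ 0)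
    (hu : Tendsto (fun n : ℕ => l ^ n * a) atTop (𝓝 c)) (hv : Tendsto v atTop (𝓝 c'))
    (hlv : ∀ n, l ^ n * v n = a) : l = 1 := by
  have hconst : (fun n => l ^ n * a * v n) = fun _ => a * a := by
    funext n
    rw [mul_right_comm, hlv]
  have hcc' : c * c' = a * a :=
    tendsto_nhds_unique (hu.mul hv) (hconst ▸ tendsto_const_nhds)
  exact eq_one_of_tendsto_pow_mul (left_ne_zero_of_mul (hcc' ▸ mul_ne_zero ha ha)) hu

end Field

theorem stmt_15_general (φ ψ : ℝ → ℝ)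
    (hψ1 : ∀ x, φ (ψ x) = x)
    (f : ℝ → ℂ) (hf : Continuous f)
    (hvan : Filter.Tendsto f (Filter.cocompact ℝ) (nhds 0))
    (hne : f ≠ 0) (l : ℂ) (heig : ∀ x, f (φ x) = l * f x)
    (hconv : ∀ t : ℝ, (∃ L : EReal, Filter.Tendsto (fun n : ℕ => ((φ^[n] t : ℝ) : EReal))
        Filter.atTop (nhds L)) ∧
      (∃ L : EReal, Filter.Tendsto (fun n : ℕ => ((ψ^[n] t : ℝ) : EReal))
        Filter.atTop (nhds L))) :
    l = 1 := by
  obtain ⟨t, ht⟩ := Function.ne_iff.mp hne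
  have hiter (n : ℕ) (x : ℝ) : f (φ^[n] x) = l ^ n * f x := by
    rw [(Function.Semiconj.iterate_right (f := f) heig n) x, mul_left_iterate_apply]
  obtain ⟨⟨L, hL⟩, ⟨L', hL'⟩⟩ := hconv t
  obtain ⟨c, hc⟩ := exists_tendsto_comp_of_tendsto_coe_ereal hf hvan hL
  obtain ⟨c', hc'⟩ := exists_tendsto_comp_of_tendsto_coe_ereal hf hvan hL'
  refine eq_one_of_tendsto_pow_mul_of_tendsto ht (c := c) ?_ hc' fun n => ?_
  · simpa only [Function.comp_def, hiter] using hc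
  · rw [Function.comp_apply, ← hiter, Function.LeftInverse.iterate hψ1 n t]

theorem stmt_15 (φ ψ : ℝ → ℝ) (hc : Continuous φ) (hbij : Function.Bijective φ)
    (hψ1 : ∀ x, φ (ψ x) = x) (hψ2 : ∀ x, ψ (φ x) = x)
    (f : ℝ → ℂ) (hf : Continuous f)
    (hvan : Filter.Tendsto f (Filter.cocompact ℝ) (nhds 0))
    (hne : f ≠ 0) (l : ℂ) (heig : ∀ x, f (φ x) = l * f x)
    (hconv : ∀ t : ℝ, (∃ L : EReal, Filter.Tendsto (fun n : ℕ => ((φ^[n] t : ℝ) : EReal))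
        Filter.atTop (nhds L)) ∧
      (∃ L : EReal, Filter.Tendsto (fun n : ℕ => ((ψ^[n] t : ℝ) : EReal))
        Filter.atTop (nhds L))) :
    l = 1 :=
  stmt_15_general φ ψ hψ1 f hf hvan hne l heig hconv
end

section
/- Let λ ∈ ℂ with |λ| = 1 and let g : ℝ → ℂ be a function with ∑_{k ∈ ℤ} |g(x - k)| < ∞ for each x, decaying so that both series below converge. Suppose f : ℝ → ℂ tends to 0 at ±∞ and satisfies f(x+1) = λ·f(x) + g(x) for all x. Then ∑_{k ∈ ℤ} λᵏ·g(x - k) = 0 for every x ∈ ℝ. -/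
/-! With `a k = l ^ k * f (x + 1 - k)` the recurrence gives `l ^ k * g (x - k) = a k - a (k + 1)`.
Since `‖l‖ = 1` and `f` vanishes at infinity, `a k → 0` as `|k| → ∞`, so the series over `ℤ`
telescopes to `0`. -/

open Filter Topology

theorem HasSum.eq_zero_of_sub_succ {E : Type*} [AddCommGroup E] [TopologicalSpace E]
    [IsTopologicalAddGroup E] [T2Space E] {a : ℤ → E} {s : E}
    (hs : HasSum (fun k => a k - a (k + 1)) s) (ha : Tendsto a cofinite (𝓝 0)) : s = 0 := by
  have hnat : Tendsto (fun n : ℕ => a n) atTop (𝓝 0) := by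
    rw [← Nat.cofinite_eq_atTop]
    exact ha.comp Nat.cast_injective.tendsto_cofinite
  have hneg : Tendsto (fun n : ℕ => a (-n)) atTop (𝓝 0) := by
    rw [← Nat.cofinite_eq_atTop]
    exact ha.comp (neg_injective.comp Nat.cast_injective).tendsto_cofinite
  have hpartial (N : ℕ) : ∑ n ∈ Finset.range N,
      ((a n - a (n + 1)) + (a (-(n + 1)) - a (-(n + 1) + 1))) = a (-N) - a N := by
    have hright := Finset.sum_range_sub' (fun n : ℕ => a n) N
    have hleft := Finset.sum_range_sub (fun n : ℕ => a (-n)) N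
    push_cast at hright hleft
    have hshift (n : ℕ) : -((n : ℤ) + 1) + 1 = -n := by ring
    simp only [hshift, Finset.sum_add_distrib, hright, hleft, neg_zero]
    abel
  refine tendsto_nhds_unique hs.nat_add_neg_add_one.tendsto_sum_nat ?_
  simpa only [hpartial, sub_zero] using hneg.sub hnat

theorem stmt_18 (l : ℂ) (hl : ‖l‖ = 1) (g : ℝ → ℂ)
    (hsum : ∀ x : ℝ, Summable (fun k : ℤ => ‖g (x - k)‖))
    (f : ℝ → ℂ) (hvan : Filter.Tendsto f (Filter.cocompact ℝ) (nhds 0))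
    (heq : ∀ x : ℝ, f (x + 1) = l * f x + g x) :
    ∀ x : ℝ, ∑' k : ℤ, l ^ k * g (x - k) = 0 := by
  intro x
  have hl0 : l ≠ 0 := norm_ne_zero_iff.mp (hl ▸ one_ne_zero)
  have hnorm (k : ℤ) (y : ℂ) : ‖l ^ k * y‖ = ‖y‖ := by
    rw [norm_mul, norm_zpow, hl, one_zpow, one_mul]
  set a : ℤ → ℂ := fun k => l ^ k * f (x + 1 - k)
  have hterm (k : ℤ) : l ^ k * g (x - k) = a k - a (k + 1) := by
    have hg : g (x - k) = f (x + 1 - k) - l * f (x - k) := by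
      rw [add_sub_right_comm, heq]; ring
    simp only [a, hg, zpow_add_one₀ hl0, Int.cast_add, Int.cast_one]
    ring_nf
  have ha : Tendsto a cofinite (𝓝 0) := by
    have hshift : Tendsto (fun k : ℤ => x + 1 - k) cofinite (cocompact ℝ) :=
      Tendsto.comp (Homeomorph.subLeft (x + 1)).map_cocompact.le Int.tendsto_coe_cofinite
    rw [tendsto_zero_iff_norm_tendsto_zero]
    simpa only [a, hnorm, norm_zero, Function.comp_def] using (hvan.comp hshift).norm
  have hsummable : Summable fun k : ℤ => l ^ k * g (x - k) :=
    Summable.of_norm (by simpa only [hnorm] using hsum x)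
  simp only [hterm] at hsummable ⊢
  exact hsummable.hasSum.eq_zero_of_sub_succ ha
end

section
/- Let a ∈ ℝ with |a| > 1, λ ∈ ℂ with |λ| ≥ 1, and let f, g : ℝ → ℂ with f continuous tending to 0 at ±∞ and g rapidly decreasing (|g(y)| ≤ C/(1+y²) for some C). If f(a·x) = λ·f(x) + g(x) for all x, then f(x) = -(1/λ)·∑_{k=0}^∞ λ^{-k}·g(aᵏ·x) for every x ≠ 0. -/
/-!
Iterating `f (a x) = λ f x + g x` gives
`f x = λ⁻ⁿ f (aⁿ x) - ∑_{k<n} λ^{-(k+1)} g (aᵏ x)`.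
Since `|aⁿ x| → ∞`, the first term tends to `0` (as `‖λ⁻¹‖ ≤ 1`), while
`|g (aᵏ x)| ≤ C / (a²ᵏ x²)` makes the series converge absolutely by comparison with a
geometric series.
-/

open Filter Topology Finset

theorem eq_inv_pow_mul_iterate_sub_sum {K α : Type*} [Field K] {T : α → α} {f g : α → K}
    {l : K} (hl : l ≠ 0) (heq : ∀ x, f (T x) = l * f x + g x) (x : α) (n : ℕ) :
    f x = l⁻¹ ^ n * f (T^[n] x) - ∑ k ∈ range n, l⁻¹ ^ (k + 1) * g (T^[k] x) := by
  induction n with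
  | zero => simp
  | succ n ih =>
    rw [Function.iterate_succ_apply', heq, sum_range_succ, ih]
    have hcancel : l⁻¹ ^ (n + 1) * l = l⁻¹ ^ n := by
      rw [pow_succ, mul_assoc, inv_mul_cancel₀ hl, mul_one]
    linear_combination (-f (T^[n] x)) * hcancel

theorem norm_inv_pow_mul_le {K : Type*} [NormedDivisionRing K] {l : K} (hl : 1 ≤ ‖l‖)
    (k : ℕ) (y : K) : ‖l⁻¹ ^ k * y‖ ≤ ‖y‖ := by
  rw [norm_mul, norm_pow, norm_inv]
  exact mul_le_of_le_one_left (norm_nonneg _)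
    (pow_le_one₀ (by positivity) (inv_le_one_of_one_le₀ hl))

theorem eq_neg_inv_mul_tsum_of_tendsto_iterate {K α : Type*} [NormedField K] {T : α → α}
    {f g : α → K} {l : K} (hl : 1 ≤ ‖l‖) (heq : ∀ x, f (T x) = l * f x + g x) (x : α)
    (hf : Tendsto (fun n ↦ f (T^[n] x)) atTop (𝓝 0))
    (hg : Summable fun k ↦ l⁻¹ ^ k * g (T^[k] x)) :
    f x = -l⁻¹ * ∑' k, l⁻¹ ^ k * g (T^[k] x) := by
  have hl0 : l ≠ 0 := norm_pos_iff.mp (one_pos.trans_le hl)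
  have hhead : Tendsto (fun n ↦ l⁻¹ ^ n * f (T^[n] x)) atTop (𝓝 0) :=
    squeeze_zero_norm (fun n ↦ norm_inv_pow_mul_le hl n _)
      (tendsto_zero_iff_norm_tendsto_zero.mp hf)
  have htail : Tendsto (fun n ↦ ∑ k ∈ range n, l⁻¹ ^ (k + 1) * g (T^[k] x)) atTop
      (𝓝 (l⁻¹ * ∑' k, l⁻¹ ^ k * g (T^[k] x))) := by
    simpa only [pow_succ', mul_assoc, ← mul_sum] using
      (hg.hasSum.mul_left l⁻¹).tendsto_sum_nat
  have hlim := (hhead.sub htail).congr fun n ↦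
    (eq_inv_pow_mul_iterate_sub_sum hl0 heq x n).symm
  rw [tendsto_nhds_unique tendsto_const_nhds hlim]
  ring

theorem tendsto_pow_mul_cocompact {a x : ℝ} (ha : 1 < |a|) (hx : x ≠ 0) :
    Tendsto (fun n : ℕ ↦ a ^ n * x) atTop (cocompact ℝ) := by
  apply tendsto_cocompact_of_tendsto_dist_comp_atTop 0
  simp only [Real.dist_eq, sub_zero, abs_mul, abs_pow]
  exact (tendsto_pow_atTop_atTop_of_one_lt ha).atTop_mul_const (abs_pos.mpr hx)

theorem summable_norm_comp_pow_mul {E : Type*} [SeminormedAddCommGroup E] {g : ℝ → E}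
    {C a x : ℝ} (hg : ∀ y, ‖g y‖ ≤ C / (1 + y ^ 2)) (ha : 1 < |a|) (hx : x ≠ 0) :
    Summable fun k : ℕ ↦ ‖g (a ^ k * x)‖ := by
  have hC : 0 ≤ C := by simpa using (norm_nonneg _).trans (hg 0)
  have ha2 : 1 < a ^ 2 := by rw [← sq_abs]; exact one_lt_pow₀ ha two_ne_zero
  have hx2 : 0 < x ^ 2 := by positivity
  have hgeom : Summable fun k : ℕ ↦ C / x ^ 2 * (a ^ 2)⁻¹ ^ k :=
    (summable_geometric_of_lt_one (by positivity) (inv_lt_one_of_one_lt₀ ha2)).mul_left _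
  refine hgeom.of_nonneg_of_le (fun _ ↦ norm_nonneg _) fun k ↦ ?_
  calc ‖g (a ^ k * x)‖ ≤ C / (1 + (a ^ k * x) ^ 2) := hg _
    _ ≤ C / ((a ^ 2) ^ k * x ^ 2) := by
      gcongr
      rw [mul_pow, ← pow_mul, ← pow_mul, mul_comm 2 k]
      linarith
    _ = C / x ^ 2 * (a ^ 2)⁻¹ ^ k := by rw [inv_pow]; field_simp

theorem stmt_19_general (a : ℝ) (ha : 1 < |a|) (l : ℂ) (hl : 1 ≤ ‖l‖)
    (f g : ℝ → ℂ)
    (hvan : Filter.Tendsto f (Filter.cocompact ℝ) (nhds 0))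
    (C : ℝ) (hg : ∀ y : ℝ, ‖g y‖ ≤ C / (1 + y ^ 2))
    (heq : ∀ x : ℝ, f (a * x) = l * f x + g x) :
    ∀ x : ℝ, x ≠ 0 → f x = -(1 / l) * ∑' k : ℕ, (1 / l) ^ k * g (a ^ k * x) := by
  intro x hx
  have hf : Tendsto (fun n : ℕ ↦ f ((a * ·)^[n] x)) atTop (𝓝 0) := by
    simpa only [mul_left_iterate_apply, Function.comp_def] using
      hvan.comp (tendsto_pow_mul_cocompact ha hx)
  have hsum : Summable fun k : ℕ ↦ l⁻¹ ^ k * g ((a * ·)^[k] x) := by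
    simpa only [mul_left_iterate_apply] using
      Summable.of_norm_bounded (summable_norm_comp_pow_mul hg ha hx)
        fun k ↦ norm_inv_pow_mul_le hl k (g (a ^ k * x))
  simpa only [one_div, mul_left_iterate_apply] using
    eq_neg_inv_mul_tsum_of_tendsto_iterate hl heq x hf hsum

theorem stmt_19 (a : ℝ) (ha : 1 < |a|) (l : ℂ) (hl : 1 ≤ ‖l‖)
    (f g : ℝ → ℂ) (hf : Continuous f)
    (hvan : Filter.Tendsto f (Filter.cocompact ℝ) (nhds 0))
    (C : ℝ) (hg : ∀ y : ℝ, ‖g y‖ ≤ C / (1 + y ^ 2))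
    (heq : ∀ x : ℝ, f (a * x) = l * f x + g x) :
    ∀ x : ℝ, x ≠ 0 → f x = -(1 / l) * ∑' k : ℕ, (1 / l) ^ k * g (a ^ k * x) :=
  stmt_19_general a ha l hl f g hvan C hg heq
end
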